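/- With X(a,b,c) := ∑_{n≥0} q^{bn+c}/(1 - q^{5n+a}) - ∑_{n≥0} q^{(5-b)n + (5+c-a-b)}/(1 - q^{5n+5-a}), one has X(4,1,0) = 0 and X(3,2,1) = 0. -/

import Mathlib

/-!
Expanding each term geometrically, `∑ₙ q^(bn+c) / (1 - q^(dn+a))` becomes the double series
`∑_{n,m} q^(bn + c + m(dn+a)) = ∑_{n,m} q^(bn + am + dnm + c)`, which is symmetric under
exchanging `(a, n)` with `(b, m)`. Both identities are instances of this swap: the two sums
of `X(4,1,0)` are the cases `(a,b) = (4,1), (1,4)` and those of `X(3,2,1)` are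
`(a,b) = (3,2), (2,3)`, all with `d = 5`.
-/

open scoped BigOperators

/-- The infinite q-Pochhammer symbol `(a; q)_∞ = ∏_{n ≥ 0} (1 - a qⁿ)`. -/
noncomputable def qPoch (a q : ℂ) : ℂ := ∏' n : ℕ, (1 - a * q ^ n)

/-- The Lambert-type series `X(a,b,c)` of Jin–Liu–Xia. -/
noncomputable def Xs (q : ℂ) (a b c : ℕ) : ℂ :=
  (∑' n : ℕ, q ^ (b * n + c) / (1 - q ^ (5 * n + a))) -
    ∑' n : ℕ, q ^ ((5 - b) * n + (5 + c - a - b)) / (1 - q ^ (5 * n + (5 - a)))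

section LambertSeries

variable {K : Type*} [NormedField K] [CompleteSpace K] {q : K}

theorem summable_lambert_expansion (hq : ‖q‖ < 1) {a b : ℕ} (c d : ℕ) (ha : 1 ≤ a)
    (hb : 1 ≤ b) : Summable fun p : ℕ × ℕ => q ^ (b * p.1 + c + p.2 * (d * p.1 + a)) := by
  have hgeom := summable_geometric_of_lt_one (norm_nonneg q) hq
  refine Summable.of_norm_bounded (g := fun p : ℕ × ℕ => ‖q‖ ^ p.1 * ‖q‖ ^ p.2)
    (hgeom.mul_of_nonneg hgeom (fun _ => by positivity) fun _ => by positivity) ?_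
  rintro ⟨n, m⟩
  dsimp only
  rw [norm_pow, ← pow_add]
  refine pow_le_pow_of_le_one (norm_nonneg q) hq.le ?_
  have hn : n ≤ b * n := Nat.le_mul_of_pos_left n hb
  have hm : m ≤ m * (d * n + a) := Nat.le_mul_of_pos_right m (by omega)
  omega

theorem tsum_lambert_eq_tsum_prod (hq : ‖q‖ < 1) {a b : ℕ} (c d : ℕ) (ha : 1 ≤ a)
    (hb : 1 ≤ b) :
    ∑' n : ℕ, q ^ (b * n + c) / (1 - q ^ (d * n + a)) =
      ∑' p : ℕ × ℕ, q ^ (b * p.1 + c + p.2 * (d * p.1 + a)) := by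
  have hsum := summable_lambert_expansion hq c d ha hb
  rw [hsum.tsum_prod' hsum.prod_factor]
  refine tsum_congr fun n => ?_
  have hratio : ‖q ^ (d * n + a)‖ < 1 := by
    rw [norm_pow]
    exact pow_lt_one₀ (norm_nonneg q) hq (by omega)
  rw [div_eq_mul_inv, ← tsum_geometric_of_norm_lt_one hratio, ← tsum_mul_left]
  exact tsum_congr fun m => by rw [← pow_mul', ← pow_add]

theorem tsum_lambert_comm (hq : ‖q‖ < 1) {a b : ℕ} (c d : ℕ) (ha : 1 ≤ a) (hb : 1 ≤ b) :
    ∑' n : ℕ, q ^ (b * n + c) / (1 - q ^ (d * n + a)) =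
      ∑' n : ℕ, q ^ (a * n + c) / (1 - q ^ (d * n + b)) := by
  rw [tsum_lambert_eq_tsum_prod hq c d ha hb, tsum_lambert_eq_tsum_prod hq c d hb ha,
    ← (Equiv.prodComm ℕ ℕ).tsum_eq]
  refine tsum_congr fun ⟨n, m⟩ => congrArg (q ^ ·) ?_
  simp only [Equiv.prodComm_apply, Prod.fst_swap, Prod.snd_swap]
  ring

end LambertSeries

/-- `X(4,1,0) = 0` and `X(3,2,1) = 0`. -/
theorem stmt9 (q : ℂ) (hq : ‖q‖ < 1) :
    Xs q 4 1 0 = 0 ∧ Xs q 3 2 1 = 0 := by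
  constructor
  · rw [Xs, sub_eq_zero]
    exact tsum_lambert_comm hq 0 5 (by norm_num) (by norm_num)
  · rw [Xs, sub_eq_zero]
    exact tsum_lambert_comm hq 1 5 (by norm_num) (by norm_num)
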